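/- If G is a graph of order n with no isolated vertices, and H is a graph of order at least 2 having at least one isolated vertex, then γ_oir2(G ⊙ H) = n(β(H) + 2), where β(H) is the vertex cover number of H. -/

import Mathlib

/-- `f` is an outer-independent 2-rainbow dominating function of `G`. -/
def IsOI2RD {V : Type*} (G : SimpleGraph V) (f : V → Finset (Fin 2)) : Prop :=
  (∀ v, f v = ∅ → ∀ c : Fin 2, ∃ u, G.Adj v u ∧ c ∈ f u) ∧
  (∀ u w, f u = ∅ → f w = ∅ → ¬ G.Adj u w)

/-- The outer-independent 2-rainbow domination number of `G`. -/
noncomputable def oir2 {V : Type*} [Fintype V] (G : SimpleGraph V) : ℕ :=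
  sInf {w | ∃ f : V → Finset (Fin 2), IsOI2RD G f ∧ w = ∑ v, (f v).card}

/-- The vertex cover number `β(G)`. -/
noncomputable def betaNum {V : Type*} [Fintype V] (G : SimpleGraph V) : ℕ :=
  sInf {k | ∃ s : Finset V, (∀ u w, G.Adj u w → u ∈ s ∨ w ∈ s) ∧ s.card = k}

/-- The corona `G ⊙ H`: the vertex `(a, none)` plays the role of the vertex `a`
of `G`, and `(a, some h)` is the vertex `h` of the copy `H_a` of `H`; each
vertex `a` of `G` is joined to every vertex of `H_a`. -/
def corona {α β : Type*} (G : SimpleGraph α) (H : SimpleGraph β) :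
    SimpleGraph (α × Option β) where
  Adj x y :=
    (x.2 = none ∧ y.2 = none ∧ G.Adj x.1 y.1) ∨
    (x.1 = y.1 ∧ ∃ h h', x.2 = some h ∧ y.2 = some h' ∧ H.Adj h h') ∨
    (x.1 = y.1 ∧ x.2 = none ∧ ∃ h, y.2 = some h) ∨
    (x.1 = y.1 ∧ y.2 = none ∧ ∃ h, x.2 = some h)
  symm := by
    constructor
    rintro x y (⟨h1, h2, h3⟩ | ⟨h1, h, h', hx, hy, hadj⟩ | ⟨h1, h2, h3⟩ | ⟨h1, h2, h3⟩)
    · exact Or.inl ⟨h2, h1, h3.symm⟩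
    · exact Or.inr (Or.inl ⟨h1.symm, h', h, hy, hx, hadj.symm⟩)
    · exact Or.inr (Or.inr (Or.inr ⟨h1.symm, h2, h3⟩))
    · exact Or.inr (Or.inr (Or.inl ⟨h1.symm, h2, h3⟩))
  loopless := by
    constructor
    rintro x (⟨-, -, h⟩ | ⟨-, h, h', hx, hy, hadj⟩ | ⟨-, h2, h, h3⟩ | ⟨-, h2, h, h3⟩)
    · exact G.irrefl h
    · rw [hx] at hy
      injection hy with e
      rw [e] at hadj
      exact H.irrefl hadj
    · rw [h2] at h3
      cases h3
    · rw [h2] at h3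
      cases h3

lemma card_filter_le_sum_card {β : Type*} [Fintype β] (g : β → Finset (Fin 2)) :
    (Finset.univ.filter (fun h => g h ≠ ∅)).card ≤ ∑ h, (g h).card := by
  classical
  calc (Finset.univ.filter (fun h => g h ≠ ∅)).card
      = ∑ h ∈ Finset.univ.filter (fun h => g h ≠ ∅), 1 :=
        Finset.card_eq_sum_ones _
    _ ≤ ∑ h ∈ Finset.univ.filter (fun h => g h ≠ ∅), (g h).card := by
        apply Finset.sum_le_sum; intro i hi
        simp only [Finset.mem_filter] at hi
        exact Nat.one_le_iff_ne_zero.mpr (by simpa [Finset.card_eq_zero] using hi.2)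
    _ ≤ ∑ h, (g h).card := Finset.sum_le_sum_of_subset (Finset.filter_subset _ _)

/-- If `G` has order `n` and no isolated vertices, and `H` has order at least `2`
and at least one isolated vertex, then `γ_oir2(G ⊙ H) = n(β(H) + 2)`. -/
theorem oir2_corona_with_isolated
    {α β : Type*} [Fintype α] [Fintype β]
    (G : SimpleGraph α) (H : SimpleGraph β)
    (hG : ∀ v, ∃ u, G.Adj v u) (hcard : 2 ≤ Fintype.card β)
    (hH : ∃ w : β, ∀ u, ¬ H.Adj w u) :
    oir2 (corona G H) = Fintype.card α * (betaNum H + 2) := by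
  classical
  obtain ⟨w₀, hw₀⟩ := hH
  set b := betaNum H with hbdef
  have hcover_le : ∀ s : Finset β, (∀ u w, H.Adj u w → u ∈ s ∨ w ∈ s) → b ≤ s.card :=
    fun s hs => Nat.sInf_le ⟨s, hs, rfl⟩
  have hne : {k | ∃ s : Finset β, (∀ u w, H.Adj u w → u ∈ s ∨ w ∈ s) ∧ s.card = k}.Nonempty :=
    ⟨Finset.univ.card, Finset.univ, fun u _ _ => Or.inl (Finset.mem_univ u), rfl⟩
  obtain ⟨s₀, hs₀cov, hs₀card⟩ := Nat.sInf_mem hne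
  set s' : Finset β := s₀.erase w₀ with hs'def
  have hs'cov : ∀ u w, H.Adj u w → u ∈ s' ∨ w ∈ s' := by
    intro u w huw
    rcases hs₀cov u w huw with h | h
    · left; refine Finset.mem_erase.mpr ⟨?_, h⟩
      intro e; subst e; exact hw₀ w huw
    · right; refine Finset.mem_erase.mpr ⟨?_, h⟩
      intro e; subst e; exact hw₀ u huw.symm
  have hs'card : s'.card = b := by
    refine le_antisymm ?_ (hcover_le s' hs'cov)
    calc s'.card ≤ s₀.card := Finset.card_erase_le
      _ = b := hs₀card
  -- the value of b+2 compared to card β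
  have hb2 : b + 2 ≤ Fintype.card β := by
    have : (1 : ℕ) < Fintype.card β := by omega
    have : Nontrivial β := Fintype.one_lt_card_iff_nontrivial.mp this
    obtain ⟨x, y, hxy⟩ := this
    set x' : β := if x = w₀ then y else x with hx'def
    have hx'ne : x' ≠ w₀ := by
      by_cases h : x = w₀
      · simp [hx'def, h]; rw [h] at hxy; exact hxy.symm
      · simpa [hx'def, h] using h
    have hcov : ∀ u v, H.Adj u v → u ∈ Finset.univ \ {w₀, x'} ∨ v ∈ Finset.univ \ {w₀, x'} := by
      intro u v huv
      have hu : u ≠ w₀ := fun e => by subst e; exact hw₀ v huv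
      have hv : v ≠ w₀ := fun e => by subst e; exact hw₀ u huv.symm
      by_cases h : u = x'
      · right
        have hvx : v ≠ x' := fun e => H.irrefl (by rw [h] at huv; rw [e] at huv; exact huv)
        simp [Finset.mem_sdiff, hv, hvx]
      · left; simp [Finset.mem_sdiff, hu, h]
    have hle := hcover_le _ hcov
    have hsub : ({w₀, x'} : Finset β) ⊆ Finset.univ := Finset.subset_univ _
    have hc2 : ({w₀, x'} : Finset β).card = 2 := by
      rw [Finset.card_pair (Ne.symm hx'ne)]
    rw [Finset.card_sdiff_of_subset hsub, Finset.card_univ, hc2] at hle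
    omega
  -- upper bound
  have hmem : Fintype.card α * (b + 2) ∈ {w | ∃ f : (α × Option β) → Finset (Fin 2),
      IsOI2RD (corona G H) f ∧ w = ∑ v, (f v).card} := by
    refine ⟨fun x => x.2.elim Finset.univ (fun h => if h ∈ s' then {0} else ∅), ⟨?_, ?_⟩, ?_⟩
    · rintro ⟨a, o⟩ hv c
      cases o with
      | none => simp at hv; exact absurd hv (by decide)
      | some h =>
        refine ⟨(a, none), ?_, ?_⟩
        · exact Or.inr (Or.inr (Or.inr ⟨rfl, rfl, h, rfl⟩))
        · simp
    · rintro ⟨a, o⟩ ⟨a', o'⟩ hu hw hadj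
      cases o with
      | none => simp at hu; exact absurd hu (by decide)
      | some h =>
      cases o' with
      | none => simp at hw; exact absurd hw (by decide)
      | some h' =>
        simp only [Option.elim_some, ite_eq_right_iff] at hu hw
        have hh : h ∉ s' := fun hm => by simpa using hu hm
        have hh' : h' ∉ s' := fun hm => by simpa using hw hm
        rcases hadj with ⟨h1, _, _⟩ | ⟨_, x, y, hx, hy, hxy⟩ | ⟨_, h1, _⟩ | ⟨_, h1, _⟩
        · simp at h1
        · injection hx with e; injection hy with e'
          subst e; subst e'
          rcases hs'cov _ _ hxy with hm | hm
          · exact hh hm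
          · exact hh' hm
        · simp at h1
        · simp at h1
    · rw [eq_comm, Fintype.sum_prod_type]
      have : ∀ a : α, (∑ o : Option β,
          ((o.elim Finset.univ (fun h => if h ∈ s' then ({0} : Finset (Fin 2)) else ∅)).card))
          = b + 2 := by
        intro a
        rw [Fintype.sum_option]
        simp only [Option.elim_none, Option.elim_some]
        have h1 : (Finset.univ : Finset (Fin 2)).card = 2 := by decide
        have h2 : ∑ h : β, (if h ∈ s' then ({0} : Finset (Fin 2)) else ∅).card = b := by
          rw [← hs'card]
          rw [Finset.card_eq_sum_ones s', ← Finset.sum_filter_add_sum_filter_not Finset.univ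
            (fun h => h ∈ s')]
          have e1 : ∀ h ∈ Finset.univ.filter (fun h => h ∈ s'),
              (if h ∈ s' then ({0} : Finset (Fin 2)) else ∅).card = 1 := by
            intro h hh; simp only [Finset.mem_filter] at hh; simp [hh.2]
          have e2 : ∀ h ∈ Finset.univ.filter (fun h => ¬ h ∈ s'),
              (if h ∈ s' then ({0} : Finset (Fin 2)) else ∅).card = 0 := by
            intro h hh; simp only [Finset.mem_filter] at hh; simp [hh.2]
          rw [Finset.sum_congr rfl e1, Finset.sum_congr rfl e2, Finset.sum_const_zero, add_zero]
          simp [Finset.sum_const, Finset.filter_mem_eq_inter]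
        rw [h1, h2]; omega
      rw [Finset.sum_congr rfl (fun a _ => this a)]
      simp [Finset.sum_const, mul_comm]
  -- lower bound
  have hlb : ∀ m ∈ {w | ∃ f : (α × Option β) → Finset (Fin 2),
      IsOI2RD (corona G H) f ∧ w = ∑ v, (f v).card}, Fintype.card α * (b + 2) ≤ m := by
    rintro m ⟨f, ⟨hdom, hind⟩, rfl⟩
    rw [Fintype.sum_prod_type]
    have key : ∀ a : α, b + 2 ≤ ∑ o : Option β, (f (a, o)).card := by
      intro a
      rw [Fintype.sum_option]
      set C : Finset β := Finset.univ.filter (fun h => f (a, some h) ≠ ∅) with hCdef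
      have hCsum : C.card ≤ ∑ h : β, (f (a, some h)).card :=
        card_filter_le_sum_card (fun h => f (a, some h))
      have hCcov : ∀ u v, H.Adj u v → u ∈ C ∨ v ∈ C := by
        intro u v huv
        by_contra hcon
        push_neg at hcon
        obtain ⟨hu, hv⟩ := hcon
        simp only [hCdef, Finset.mem_filter, Finset.mem_univ, true_and, not_not] at hu hv
        exact hind (a, some u) (a, some v) hu hv
          (Or.inr (Or.inl ⟨rfl, u, v, rfl, rfl, huv⟩))
      by_cases hcw : f (a, some w₀) = ∅
      · -- v_a must carry {0,1}
        have hboth : ∀ c : Fin 2, c ∈ f (a, none) := by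
          intro c
          obtain ⟨u, hadj, hmem⟩ := hdom (a, some w₀) hcw c
          have : u = (a, none) := by
            rcases hadj with ⟨h1, _, _⟩ | ⟨_, x, y, hx, hy, hxy⟩ | ⟨_, h1, _⟩ | ⟨heq, h1, _⟩
            · simp at h1
            · injection hx with e; subst e; exact absurd hxy (hw₀ y)
            · simp at h1
            · exact Prod.ext heq.symm h1
          rwa [this] at hmem
        have h2 : 2 ≤ (f (a, none)).card := by
          have : ({0, 1} : Finset (Fin 2)) ⊆ f (a, none) := by
            intro c hc
            fin_cases hc <;> exact hboth _
          calc (2 : ℕ) = ({0, 1} : Finset (Fin 2)).card := by decide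
            _ ≤ (f (a, none)).card := Finset.card_le_card this
        have := hcover_le C hCcov
        omega
      · by_cases hcv : f (a, none) = ∅
        · -- all copy vertices are nonzero
          have hall : ∀ h : β, f (a, some h) ≠ ∅ := by
            intro h he
            exact hind (a, none) (a, some h) hcv he
              (Or.inr (Or.inr (Or.inl ⟨rfl, rfl, h, rfl⟩)))
          have hCeq : C = Finset.univ := by
            rw [hCdef, Finset.filter_true_of_mem (fun h _ => hall h)]
          have : Fintype.card β ≤ ∑ h : β, (f (a, some h)).card := by
            calc Fintype.card β = C.card := by rw [hCeq, Finset.card_univ]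
              _ ≤ _ := hCsum
          omega
        · -- both v_a and the isolated copy vertex are nonzero
          have hw₀C : w₀ ∈ C := by
            simp [hCdef, hcw]
          have hCecov : ∀ u v, H.Adj u v → u ∈ C.erase w₀ ∨ v ∈ C.erase w₀ := by
            intro u v huv
            rcases hCcov u v huv with h | h
            · left; refine Finset.mem_erase.mpr ⟨?_, h⟩
              intro e; subst e; exact hw₀ v huv
            · right; refine Finset.mem_erase.mpr ⟨?_, h⟩
              intro e; subst e; exact hw₀ u huv.symm
          have h1 := hcover_le _ hCecov
          rw [Finset.card_erase_of_mem hw₀C] at h1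
          have hCpos : 1 ≤ C.card := Finset.card_pos.mpr ⟨w₀, hw₀C⟩
          have hv1 : 1 ≤ (f (a, none)).card :=
            Nat.one_le_iff_ne_zero.mpr (by simpa [Finset.card_eq_zero] using hcv)
          omega
    calc Fintype.card α * (b + 2) = ∑ _a : α, (b + 2) := by
          simp [Finset.sum_const, Finset.card_univ, mul_comm]
      _ ≤ _ := Finset.sum_le_sum (fun a _ => key a)
  exact le_antisymm (Nat.sInf_le hmem) (le_csInf ⟨_, hmem⟩ hlb)
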